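/- Let F be a bounded bilinear map with regular matrix representation F and largest singular value σ₁(F), and let {H₁,…,H_K} be a sub-matrix partition of the m-by-n matrix H into m_k-by-n_k blocks. Then (1/(mn)) Σ_{k=1}^K m_k n_k · (2/√(m_k n_k)) Σ_{l=1}^{min(m_k,n_k)} σ_l(H_k)/σ_l(F) ≥ (2/(mn σ₁(F))) Σ_{i,j} |H_{ij}|, with equality when every block H_k is monochromatic. -/

import Mathlib

/-!
On each block `H_k`, Cauchy–Schwarz gives `∑ |H_k(i,j)| ≤ √(m_k n_k) ‖H_k‖_F`, and
`‖H_k‖_F² = ∑ σ_l(H_k)² ≤ (∑ σ_l(H_k))²`, where only the first `min(m_k, n_k)` singular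
values can be nonzero; dividing by `σ₁(F) ≥ σ_l(F)` and summing over the partition gives the
bound. A monochromatic block has rank at most one, so `σ₁(H_k) = ‖H_k‖_F` is its only nonzero
singular value, and Cauchy–Schwarz is an equality for a constant block.
-/

open scoped BigOperators

noncomputable def eigsDesc {n : ℕ} {A : Matrix (Fin n) (Fin n) ℝ} (hA : A.IsHermitian) :
    Fin n → ℝ := fun i => (hA.eigenvalues ∘ Tuple.sort hA.eigenvalues) i.rev

noncomputable def singVals {m n : ℕ} (M : Matrix (Fin m) (Fin n) ℝ) : Fin m → ℝ :=
  fun i => Real.sqrt (eigsDesc (Matrix.isHermitian_mul_conjTranspose_self M) i)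

open Finset Matrix

section Eigenvalues

variable {p : ℕ} {A : Matrix (Fin p) (Fin p) ℝ}

lemma eigsDesc_antitone (hA : A.IsHermitian) : Antitone (eigsDesc hA) :=
  fun _ _ hij => Tuple.monotone_sort hA.eigenvalues (Fin.rev_le_rev.mpr hij)

lemma sum_eigsDesc (hA : A.IsHermitian) : ∑ i, eigsDesc hA i = A.trace := by
  rw [hA.trace_eq_sum_eigenvalues]
  exact Equiv.sum_comp (Fin.revPerm.trans (Tuple.sort hA.eigenvalues)) hA.eigenvalues

lemma eigsDesc_eq_zero_of_rank_le (hA : A.IsHermitian) (hnonneg : ∀ i, 0 ≤ hA.eigenvalues i)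
    {r : ℕ} (hr : A.rank ≤ r) {i : Fin p} (hi : r ≤ i) : eigsDesc hA i = 0 := by
  by_contra hne
  set e := Fin.revPerm.trans (Tuple.sort hA.eigenvalues)
  have hpos : 0 < eigsDesc hA i := lt_of_le_of_ne (hnonneg _) (Ne.symm hne)
  -- The `i + 1` largest eigenvalues are positive, while only `A.rank` eigenvalues are nonzero.
  have hmaps : ∀ j ∈ Iic i, e j ∈ univ.filter (fun j => hA.eigenvalues j ≠ 0) := fun j hj =>
    mem_filter.mpr ⟨mem_univ _, (hpos.trans_le (eigsDesc_antitone hA (mem_Iic.mp hj))).ne'⟩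
  have hcard := card_le_card_of_injOn e hmaps e.injective.injOn
  rw [Fin.card_Iic, ← Fintype.card_subtype, ← hA.rank_eq_card_non_zero_eigs] at hcard
  omega

end Eigenvalues

section SingularValues

variable {p q : ℕ} (M : Matrix (Fin p) (Fin q) ℝ) (σF : ℕ → ℝ)

lemma singVals_nonneg (a : Fin p) : 0 ≤ singVals M a := Real.sqrt_nonneg _

lemma sq_singVals (a : Fin p) :
    singVals M a ^ 2 = eigsDesc (isHermitian_mul_conjTranspose_self M) a :=
  Real.sq_sqrt ((posSemidef_self_mul_conjTranspose M).eigenvalues_nonneg _)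

lemma singVals_eq_zero_of_rank_le {r : ℕ} (hr : M.rank ≤ r) {a : Fin p} (ha : r ≤ a) :
    singVals M a = 0 := by
  rw [singVals, eigsDesc_eq_zero_of_rank_le _
    (posSemidef_self_mul_conjTranspose M).eigenvalues_nonneg
    ((rank_self_mul_conjTranspose M).trans_le hr) ha, Real.sqrt_zero]

lemma singVals_eq_zero_of_min_le {a : Fin p} (ha : min p q ≤ a) : singVals M a = 0 :=
  singVals_eq_zero_of_rank_le M (le_min ((rank_le_card_height M).trans_eq (Fintype.card_fin p))
    ((rank_le_card_width M).trans_eq (Fintype.card_fin q))) ha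

lemma sum_sq_singVals : ∑ a, singVals M a ^ 2 = ∑ i, ∑ j, M i j ^ 2 := by
  simp_rw [sq_singVals, sum_eigsDesc, trace, Matrix.diag, mul_apply, conjTranspose_apply,
    star_trivial, sq]

lemma sum_filter_sq_singVals :
    ∑ a ∈ univ.filter (fun a : Fin p => (a : ℕ) < min p q), singVals M a ^ 2 =
      ∑ i, ∑ j, M i j ^ 2 := by
  rw [sum_filter_of_ne fun a _ h => ?_, sum_sq_singVals]
  by_contra ha
  exact h (by rw [singVals_eq_zero_of_min_le M (not_lt.mp ha), zero_pow two_ne_zero])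

lemma sqrt_sum_sq_le_sum_singVals :
    Real.sqrt (∑ i, ∑ j, M i j ^ 2) ≤
      ∑ a ∈ univ.filter (fun a : Fin p => (a : ℕ) < min p q), singVals M a := by
  rw [← sum_filter_sq_singVals, Real.sqrt_le_left (sum_nonneg fun a _ => singVals_nonneg M a)]
  exact sum_sq_le_sq_sum_of_nonneg fun a _ => singVals_nonneg M a

lemma sum_abs_le_sqrt_mul_sqrt_sum_sq :
    ∑ i, ∑ j, |M i j| ≤ Real.sqrt (p * q) * Real.sqrt (∑ i, ∑ j, M i j ^ 2) := by
  rw [← Real.sqrt_mul (by positivity), Real.le_sqrt (by positivity) (by positivity)]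
  have h := sq_sum_le_card_mul_sum_sq (s := (univ : Finset (Fin p × Fin q)))
    (f := fun x => |M x.1 x.2|)
  simp only [card_univ, Fintype.card_prod, Fintype.card_fin, sq_abs, Fintype.sum_prod_type] at h
  exact_mod_cast h

lemma sum_abs_eq_sqrt_mul_sqrt_sum_sq_of_const {c : ℝ} (hc : ∀ i j, M i j = c) :
    ∑ i, ∑ j, |M i j| = Real.sqrt (p * q) * Real.sqrt (∑ i, ∑ j, M i j ^ 2) := by
  have hsq : (p : ℝ) * (q * c ^ 2) = (Real.sqrt (p * q) * |c|) ^ 2 := by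
    rw [mul_pow, Real.sq_sqrt (by positivity), sq_abs, mul_assoc]
  simp only [hc, sum_const, card_univ, Fintype.card_fin, nsmul_eq_mul]
  rw [hsq, Real.sqrt_sq (by positivity), ← mul_assoc (Real.sqrt _),
    Real.mul_self_sqrt (by positivity), mul_assoc]

noncomputable def singValRatioSum : ℝ :=
  ∑ a ∈ univ.filter (fun a : Fin p => (a : ℕ) < min p q), singVals M a / σF a

lemma sum_singVals_div_le_singValRatioSum (hpos : ∀ i, 0 < σF i) (hanti : Antitone σF) :
    (∑ a ∈ univ.filter (fun a : Fin p => (a : ℕ) < min p q), singVals M a) / σF 0 ≤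
      singValRatioSum M σF := by
  rw [sum_div]
  exact sum_le_sum fun a _ =>
    div_le_div_of_nonneg_left (singVals_nonneg M a) (hpos a) (hanti (Nat.zero_le a))

lemma sum_abs_div_le_sqrt_mul_singValRatioSum (hpos : ∀ i, 0 < σF i) (hanti : Antitone σF) :
    (∑ i, ∑ j, |M i j|) / σF 0 ≤ Real.sqrt (p * q) * singValRatioSum M σF := calc
  (∑ i, ∑ j, |M i j|) / σF 0
      ≤ Real.sqrt (p * q) * Real.sqrt (∑ i, ∑ j, M i j ^ 2) / σF 0 := by
        gcongr
        · exact (hpos 0).le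
        · exact sum_abs_le_sqrt_mul_sqrt_sum_sq M
  _ ≤ Real.sqrt (p * q) *
        ((∑ a ∈ univ.filter (fun a : Fin p => (a : ℕ) < min p q), singVals M a) / σF 0) := by
        rw [mul_div_assoc]
        gcongr
        · exact (hpos 0).le
        · exact sqrt_sum_sq_le_sum_singVals M
  _ ≤ Real.sqrt (p * q) * singValRatioSum M σF := by
        gcongr
        exact sum_singVals_div_le_singValRatioSum M σF hpos hanti

lemma singValRatioSum_of_rank_le_one (hr : M.rank ≤ 1) (hp : 0 < p) (hq : 0 < q) :
    singValRatioSum M σF = Real.sqrt (∑ i, ∑ j, M i j ^ 2) / σF 0 := by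
  set a₀ : Fin p := ⟨0, hp⟩
  have hzero : ∀ a ≠ a₀, singVals M a = 0 := fun a ha =>
    singVals_eq_zero_of_rank_le M hr (Nat.one_le_iff_ne_zero.mpr fun h => ha (Fin.ext h))
  have hsq : singVals M a₀ ^ 2 = ∑ i, ∑ j, M i j ^ 2 := by
    rw [← sum_sq_singVals, sum_eq_single a₀ fun a _ ha => by rw [hzero a ha, sq, zero_mul]]
    simp
  rw [singValRatioSum, sum_eq_single_of_mem a₀ (by simp [a₀, hq])
    fun a _ ha => by rw [hzero a ha, zero_div], ← hsq, Real.sqrt_sq (singVals_nonneg M a₀)]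

lemma sum_abs_div_eq_sqrt_mul_singValRatioSum_of_const
    (hM : ∀ (i i' : Fin p) (j j' : Fin q), M i j = M i' j') :
    (∑ i, ∑ j, |M i j|) / σF 0 = Real.sqrt (p * q) * singValRatioSum M σF := by
  rcases Nat.eq_zero_or_pos p with rfl | hp
  · simp [singValRatioSum]
  rcases Nat.eq_zero_or_pos q with rfl | hq
  · simp [singValRatioSum]
  obtain ⟨c, hc⟩ : ∃ c, ∀ i j, M i j = c :=
    ⟨_, fun i j => hM i ⟨0, hp⟩ j ⟨0, hq⟩⟩
  have hr : M.rank ≤ 1 := by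
    convert rank_vecMulVec_le (fun _ : Fin p => c) (fun _ : Fin q => (1 : ℝ))
    ext i j
    simp [vecMulVec_apply, hc]
  rw [singValRatioSum_of_rank_le_one M σF hr hp hq,
    sum_abs_eq_sqrt_mul_sqrt_sum_sq_of_const M hc, mul_div_assoc]

end SingularValues

lemma sum_eq_sum_blocks {ι κ K R : Type*} [Fintype ι] [Fintype κ] [Fintype K]
    [AddCommMonoid R] {α β : K → Type*} [∀ k, Fintype (α k)] [∀ k, Fintype (β k)]
    (t : ∀ k, α k → ι) (s : ∀ k, β k → κ)
    (hpart : ∀ i j, ∃! x : Σ k, α k × β k, t x.1 x.2.1 = i ∧ s x.1 x.2.2 = j)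
    (f : ι → κ → R) :
    ∑ i, ∑ j, f i j = ∑ k, ∑ a, ∑ b, f (t k a) (s k b) := by
  have hbij : Function.Bijective fun x : Σ k, α k × β k => (t x.1 x.2.1, s x.1 x.2.2) := by
    refine Function.bijective_iff_existsUnique _ |>.mpr fun y => ?_
    simpa only [Prod.ext_iff] using hpart y.1 y.2
  rw [← Fintype.sum_prod_type', ← Fintype.sum_bijective _ hbij _ _ fun _ => rfl,
    ← univ_sigma_univ, sum_sigma]
  simp only [Fintype.sum_prod_type]

lemma mul_two_div_sqrt_mul (r x : ℝ) : r * (2 / Real.sqrt r * x) = 2 * (Real.sqrt r * x) := by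
  rw [← mul_assoc, mul_div_left_comm, Real.div_sqrt, mul_assoc]

/-- `σF` lists the singular values of `F` from index `0`, so `σF 0` is `σ₁(F)`. -/
theorem stmt_17_general {m n K : ℕ}
    (H : Matrix (Fin m) (Fin n) ℝ)
    (mk nk : Fin K → ℕ)
    (t : (k : Fin K) → Fin (mk k) → Fin m) (s : (k : Fin K) → Fin (nk k) → Fin n)
    (hpart : ∀ (i : Fin m) (j : Fin n),
      ∃! x : Σ k : Fin K, Fin (mk k) × Fin (nk k), t x.1 x.2.1 = i ∧ s x.1 x.2.2 = j)
    (σF : ℕ → ℝ) (hσFpos : ∀ i, 0 < σF i) (hσFdec : ∀ i j : ℕ, i ≤ j → σF j ≤ σF i) :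
    (2 / ((m * n : ℝ) * σF 0)) * ∑ i : Fin m, ∑ j : Fin n, |H i j| ≤
      (1 / (m * n : ℝ)) * ∑ k : Fin K, (mk k * nk k : ℝ) *
        ((2 / Real.sqrt (mk k * nk k)) *
          ∑ a ∈ Finset.univ.filter (fun a : Fin (mk k) => (a : ℕ) < min (mk k) (nk k)),
            singVals (fun i j => H (t k i) (s k j) : Matrix (Fin (mk k)) (Fin (nk k)) ℝ) a /
              σF (a : ℕ)) ∧
    ((∀ (k : Fin K) (a a' : Fin (mk k)) (b b' : Fin (nk k)),
        H (t k a) (s k b) = H (t k a') (s k b')) →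
      (2 / ((m * n : ℝ) * σF 0)) * ∑ i : Fin m, ∑ j : Fin n, |H i j| =
        (1 / (m * n : ℝ)) * ∑ k : Fin K, (mk k * nk k : ℝ) *
          ((2 / Real.sqrt (mk k * nk k)) *
            ∑ a ∈ Finset.univ.filter (fun a : Fin (mk k) => (a : ℕ) < min (mk k) (nk k)),
              singVals (fun i j => H (t k i) (s k j) : Matrix (Fin (mk k)) (Fin (nk k)) ℝ) a /
                σF (a : ℕ))) := by
  have hLHS : 2 / ((m * n : ℝ) * σF 0) * ∑ i : Fin m, ∑ j : Fin n, |H i j| =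
      1 / (m * n : ℝ) * ∑ k, 2 * ((∑ a, ∑ b, |H (t k a) (s k b)|) / σF 0) := by
    rw [sum_eq_sum_blocks t s hpart, mul_sum, mul_sum]
    exact sum_congr rfl fun k _ => by ring
  simp_rw [hLHS, mul_two_div_sqrt_mul]
  constructor
  · gcongr with k
    exact sum_abs_div_le_sqrt_mul_singValRatioSum _ σF hσFpos hσFdec
  · intro hmono
    congr 1
    exact sum_congr rfl fun k _ => by
      rw [sum_abs_div_eq_sqrt_mul_singValRatioSum_of_const _ σF (hmono k)]
      rfl

/-- Lower bound for the averaged control cost of single round protocols applied to the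
blocks of a sub-matrix partition, with equality for monochromatic partitions.
σF enumerates (1-indexed via σF 0 = σ₁(F)) the decreasing positive singular values of the
regular representation F. -/
theorem stmt_17 {m n K : ℕ} (hm : 0 < m) (hn : 0 < n)
    (H : Matrix (Fin m) (Fin n) ℝ)
    (mk nk : Fin K → ℕ)
    (t : (k : Fin K) → Fin (mk k) → Fin m) (s : (k : Fin K) → Fin (nk k) → Fin n)
    (ht : ∀ k, Function.Injective (t k)) (hs : ∀ k, Function.Injective (s k))
    (hpart : ∀ (i : Fin m) (j : Fin n),
      ∃! x : Σ k : Fin K, Fin (mk k) × Fin (nk k), t x.1 x.2.1 = i ∧ s x.1 x.2.2 = j)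
    (σF : ℕ → ℝ) (hσFpos : ∀ i, 0 < σF i) (hσFdec : ∀ i j : ℕ, i ≤ j → σF j ≤ σF i) :
    (2 / ((m * n : ℝ) * σF 0)) * ∑ i : Fin m, ∑ j : Fin n, |H i j| ≤
      (1 / (m * n : ℝ)) * ∑ k : Fin K, (mk k * nk k : ℝ) *
        ((2 / Real.sqrt (mk k * nk k)) *
          ∑ a ∈ Finset.univ.filter (fun a : Fin (mk k) => (a : ℕ) < min (mk k) (nk k)),
            singVals (fun i j => H (t k i) (s k j) : Matrix (Fin (mk k)) (Fin (nk k)) ℝ) a /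
              σF (a : ℕ)) ∧
    ((∀ (k : Fin K) (a a' : Fin (mk k)) (b b' : Fin (nk k)),
        H (t k a) (s k b) = H (t k a') (s k b')) →
      (2 / ((m * n : ℝ) * σF 0)) * ∑ i : Fin m, ∑ j : Fin n, |H i j| =
        (1 / (m * n : ℝ)) * ∑ k : Fin K, (mk k * nk k : ℝ) *
          ((2 / Real.sqrt (mk k * nk k)) *
            ∑ a ∈ Finset.univ.filter (fun a : Fin (mk k) => (a : ℕ) < min (mk k) (nk k)),
              singVals (fun i j => H (t k i) (s k j) : Matrix (Fin (mk k)) (Fin (nk k)) ℝ) a /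
                σF (a : ℕ))) :=
  stmt_17_general H mk nk t s hpart σF hσFpos hσFdec
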